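/- arXiv:1601.07085 — 5 statements merged into one kernel-verified Lean document; each statement's English description precedes it below -/
import Mathlib

section
/- Injectivity of the discrete skew gradient (implicit homogeneous boundary condition, eqs. (73)–(74)): assume (i) every edge is incident to at most two vertices; (ii) if an edge e is incident to exactly two distinct vertices ν₁, ν₂ then t_{e,ν₁} = −t_{e,ν₂}; (iii) every vertex can be joined, by a finite path of edges each incident to exactly two vertices, to some vertex that is incident to an edge having exactly one incident vertex (a boundary edge). Then any dual discrete scalar field ψ with ∇̃⊥_h ψ = 0 (i.e., Σ_{ν incident to e} t_{e,ν} ψ_ν = 0 for every edge e) satisfies ψ_ν = 0 for all ν. -/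
open Finset

noncomputable section

/-- A combinatorial staggered mesh: primary cells `C`, dual cells (vertices) `V`,
edges `E`, with areas, edge lengths, incidence relations and signs. -/
structure StagMesh (C V E : Type) [Fintype C] [Fintype V] [Fintype E]
    [DecidableEq C] [DecidableEq V] where
  /-- primary cell areas -/
  Ac : C → ℝ
  /-- dual cell areas -/
  Av : V → ℝ
  /-- primary edge lengths -/
  l : E → ℝ
  /-- dual edge lengths -/
  d : E → ℝ
  Ac_pos : ∀ i, 0 < Ac i
  Av_pos : ∀ ν, 0 < Av ν
  l_pos : ∀ e, 0 < l e
  d_pos : ∀ e, 0 < d e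
  /-- primary cells incident to an edge -/
  EC : E → Finset C
  /-- vertices (dual cells) incident to an edge -/
  EV : E → Finset V
  /-- sign `n_{e,i}` attached to an incident edge–cell pair -/
  n : E → C → ℝ
  /-- sign `t_{e,ν}` attached to an incident edge–vertex pair -/
  t : E → V → ℝ
  n_sign : ∀ e i, i ∈ EC e → n e i = 1 ∨ n e i = -1
  t_sign : ∀ e ν, ν ∈ EV e → t e ν = 1 ∨ t e ν = -1

namespace StagMesh

variable {C V E : Type} [Fintype C] [Fintype V] [Fintype E]
  [DecidableEq C] [DecidableEq V]

/-- diamond area `A_e = (1/2) l_e d_e` -/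
def Ae (M : StagMesh C V E) (e : E) : ℝ := (1 / 2) * M.l e * M.d e

/-- discrete gradient `[∇_h φ]_e = -(1/d_e) Σ_{i ~ e} n_{e,i} φ_i` -/
def grad (M : StagMesh C V E) (φ : C → ℝ) : E → ℝ :=
  fun e => -(1 / M.d e) * ∑ i ∈ M.EC e, M.n e i * φ i

/-- discrete skew gradient `[∇̃⊥_h ψ]_e = (1/l_e) Σ_{ν ~ e} t_{e,ν} ψ_ν` -/
def skewGrad (M : StagMesh C V E) (ψ : V → ℝ) : E → ℝ :=
  fun e => (1 / M.l e) * ∑ ν ∈ M.EV e, M.t e ν * ψ ν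

/-- discrete divergence `[∇_h·u]_i = (1/A_i) Σ_{e ~ i} l_e n_{e,i} u_e` -/
def dvg (M : StagMesh C V E) (u : E → ℝ) : C → ℝ :=
  fun i => (1 / M.Ac i) * ∑ e ∈ univ.filter (fun e => i ∈ M.EC e), M.l e * M.n e i * u e

/-- discrete curl `[∇̃_h×u]_ν = -(1/A_ν) Σ_{e ~ ν} d_e t_{e,ν} u_e` -/
def curl (M : StagMesh C V E) (u : E → ℝ) : V → ℝ :=
  fun ν => -(1 / M.Av ν) * ∑ e ∈ univ.filter (fun e => ν ∈ M.EV e), M.d e * M.t e ν * u e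

/-- area-weighted inner product on primary scalar fields -/
def innerC (M : StagMesh C V E) (φ φ' : C → ℝ) : ℝ := ∑ i, M.Ac i * φ i * φ' i

/-- area-weighted inner product on dual scalar fields -/
def innerV (M : StagMesh C V E) (ψ ψ' : V → ℝ) : ℝ := ∑ ν, M.Av ν * ψ ν * ψ' ν

/-- diamond-weighted inner product on discrete vector fields -/
def innerE (M : StagMesh C V E) (u u' : E → ℝ) : ℝ := ∑ e, M.Ae e * u e * u' e

/-- weighted `L²` norm on primary scalar fields -/
noncomputable def normC (M : StagMesh C V E) (φ : C → ℝ) : ℝ := Real.sqrt (M.innerC φ φ)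

/-- weighted `L²` norm on dual scalar fields -/
noncomputable def normV (M : StagMesh C V E) (ψ : V → ℝ) : ℝ := Real.sqrt (M.innerV ψ ψ)

/-- weighted `L²` norm on discrete vector fields -/
noncomputable def normE (M : StagMesh C V E) (u : E → ℝ) : ℝ := Real.sqrt (M.innerE u u)

/-- sign-cancellation condition: for every primary cell `i` and vertex `ν`,
`Σ_{e ~ i, e ~ ν} t_{e,ν} n_{e,i} = 0`. -/
def SgnCancel (M : StagMesh C V E) : Prop :=
  ∀ (i : C) (ν : V),
    ∑ e ∈ univ.filter (fun e => i ∈ M.EC e ∧ ν ∈ M.EV e), M.t e ν * M.n e i = 0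

end StagMesh

open StagMesh

/-- injectivity of the discrete skew gradient under the implicit
homogeneous boundary condition: if every edge has at most two incident vertices,
distinct incident vertices carry opposite signs, and every vertex is connected
(through edges with exactly two incident vertices) to a vertex touching a
boundary edge (an edge with exactly one incident vertex), then `∇̃⊥_h ψ = 0`
forces `ψ = 0`. -/
theorem skewGrad_injective
    {C V E : Type} [Fintype C] [Fintype V] [Fintype E]
    [DecidableEq C] [DecidableEq V]
    (M : StagMesh C V E)
    (hcard : ∀ e : E, (M.EV e).card ≤ 2)
    (hopp : ∀ (e : E) (ν₁ ν₂ : V), ν₁ ∈ M.EV e → ν₂ ∈ M.EV e → ν₁ ≠ ν₂ →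
      M.t e ν₁ = - M.t e ν₂)
    (hconn : ∀ ν : V, ∃ ν' : V,
      Relation.ReflTransGen
        (fun a b : V => ∃ e : E, (M.EV e).card = 2 ∧ a ∈ M.EV e ∧ b ∈ M.EV e ∧ a ≠ b)
        ν ν' ∧
      ∃ e : E, (M.EV e).card = 1 ∧ ν' ∈ M.EV e)
    (ψ : V → ℝ) (hψ : M.skewGrad ψ = 0) :
    ∀ ν : V, ψ ν = 0 := by
  -- each edge sum vanishes
  have hsum : ∀ e : E, ∑ ν ∈ M.EV e, M.t e ν * ψ ν = 0 := by
    intro e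
    have h0 : M.skewGrad ψ e = 0 := by rw [hψ]; rfl
    have hl : (1 / M.l e) ≠ 0 := by
      have := M.l_pos e; positivity
    unfold StagMesh.skewGrad at h0
    exact (mul_eq_zero.mp h0).resolve_left hl
  -- ψ equal across two-vertex edges
  have hstep : ∀ a b : V,
      (∃ e : E, (M.EV e).card = 2 ∧ a ∈ M.EV e ∧ b ∈ M.EV e ∧ a ≠ b) → ψ a = ψ b := by
    rintro a b ⟨e, hc, ha, hb, hab⟩
    have hEV : M.EV e = {a, b} := by
      apply Finset.eq_of_subset_of_card_le
      · intro x hx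
        simp only [Finset.mem_insert, Finset.mem_singleton]
        by_contra hx'
        push_neg at hx'
        have : ({a, b, x} : Finset V) ⊆ M.EV e := by
          intro y hy
          simp only [Finset.mem_insert, Finset.mem_singleton] at hy
          rcases hy with rfl | rfl | rfl <;> assumption
        have hcard3 : ({a, b, x} : Finset V).card = 3 := by
          rw [Finset.card_insert_of_notMem, Finset.card_insert_of_notMem] <;>
            simp [hab, hx'.1.symm, hx'.2.symm]
        have := Finset.card_le_card this
        omega
      · rw [hc]; exact Finset.card_le_two
    have hs := hsum e
    rw [hEV, Finset.sum_insert (by simp [hab]), Finset.sum_singleton] at hs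
    have ht : M.t e b = - M.t e a := hopp e b a hb ha hab.symm
    rw [ht] at hs
    have hta : M.t e a ≠ 0 := by
      rcases M.t_sign e a ha with h | h <;> rw [h] <;> norm_num
    have : M.t e a * (ψ a - ψ b) = 0 := by ring_nf; linarith
    rcases mul_eq_zero.mp this with h | h
    · exact absurd h hta
    · linarith
  -- at a boundary edge, value is 0
  have hbd : ∀ (ν' : V) (e : E), (M.EV e).card = 1 → ν' ∈ M.EV e → ψ ν' = 0 := by
    intro ν' e hc hν
    obtain ⟨x, hx⟩ := Finset.card_eq_one.mp hc
    rw [hx, Finset.mem_singleton] at hν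
    subst hν
    have hs := hsum e
    rw [hx, Finset.sum_singleton] at hs
    have hta : M.t e ν' ≠ 0 := by
      rcases M.t_sign e ν' (by rw [hx]; simp) with h | h <;> rw [h] <;> norm_num
    exact (mul_eq_zero.mp hs).resolve_left hta
  intro ν
  obtain ⟨ν', hrel, e, hc, hν'⟩ := hconn ν
  have key : ∀ a b : V, Relation.ReflTransGen
      (fun a b : V => ∃ e : E, (M.EV e).card = 2 ∧ a ∈ M.EV e ∧ b ∈ M.EV e ∧ a ≠ b)
      a b → ψ a = ψ b := by
    intro a b h
    induction h with
    | refl => rfl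
    | tail _ h ih => exact ih.trans (hstep _ _ h)
  rw [key ν ν' hrel]
  exact hbd ν' e hc hν'
end
end

section
/- Discrete Helmholtz decomposition (core of Lemma 2.5, eqs. (66)–(68)): assume (SgnCancel): for every primary cell i and every vertex ν, the sum of t_{e,ν}·n_{e,i} over all edges e incident to both i and ν equals 0; (Euler): card C + card V = card E + 1; (KerSkew): the only dual scalar field ψ with ∇̃⊥_h ψ = 0 is ψ = 0; and (KerGrad): every primary scalar field φ with ∇_h φ = 0 is constant. Then for every discrete vector field u ∈ ℝ^E there exist a unique dual scalar field ψ and a unique primary scalar field φ with Σ_{i∈C} A_i φ_i = 0 such that u = ∇̃⊥_h ψ + ∇_h φ. -/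
open Finset

noncomputable section

open StagMesh


section HelmholtzAux

variable {C V E : Type} [Fintype C] [Fintype V] [Fintype E]
  [DecidableEq C] [DecidableEq V]

lemma helm_orth (M : StagMesh C V E) (hsc : M.SgnCancel)
    (ψ : V → ℝ) (φ : C → ℝ) : M.innerE (M.skewGrad ψ) (M.grad φ) = 0 := by
  have step : M.innerE (M.skewGrad ψ) (M.grad φ)
      = ∑ e : E, (-(1/2 : ℝ)) * ∑ ν : V, ∑ i : C,
        (if i ∈ M.EC e ∧ ν ∈ M.EV e then (M.t e ν * M.n e i) * (ψ ν * φ i) else 0) := by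
    refine Finset.sum_congr rfl fun e _ => ?_
    have hl := (M.l_pos e).ne'
    have hd := (M.d_pos e).ne'
    have h2 : ∀ ν : V, ∑ i : C,
        (if i ∈ M.EC e ∧ ν ∈ M.EV e then (M.t e ν * M.n e i) * (ψ ν * φ i) else 0)
        = if ν ∈ M.EV e then (M.t e ν * ψ ν) * (∑ i ∈ M.EC e, M.n e i * φ i) else 0 := by
      intro ν
      by_cases hν : ν ∈ M.EV e
      · simp only [hν, and_true, if_true, Finset.mul_sum]
        rw [← Finset.sum_filter, Finset.filter_univ_mem]
        exact Finset.sum_congr rfl fun i _ => by ring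
      · simp [hν]
    have h1 : ∑ ν : V, ∑ i : C,
        (if i ∈ M.EC e ∧ ν ∈ M.EV e then (M.t e ν * M.n e i) * (ψ ν * φ i) else 0)
        = (∑ ν ∈ M.EV e, M.t e ν * ψ ν) * (∑ i ∈ M.EC e, M.n e i * φ i) := by
      rw [Finset.sum_congr rfl (fun ν _ => h2 ν), ← Finset.sum_filter,
        Finset.filter_univ_mem, ← Finset.sum_mul]
    rw [h1]
    show M.Ae e * M.skewGrad ψ e * M.grad φ e = _
    simp only [StagMesh.Ae, StagMesh.skewGrad, StagMesh.grad]
    field_simp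
  rw [step, ← Finset.mul_sum, Finset.sum_comm]
  have hz : ∀ ν : V, ∑ e : E, ∑ i : C,
      (if i ∈ M.EC e ∧ ν ∈ M.EV e then (M.t e ν * M.n e i) * (ψ ν * φ i) else 0) = 0 := by
    intro ν
    rw [Finset.sum_comm]
    refine Finset.sum_eq_zero fun i _ => ?_
    have : ∀ e : E, (if i ∈ M.EC e ∧ ν ∈ M.EV e then (M.t e ν * M.n e i) * (ψ ν * φ i) else 0)
        = (ψ ν * φ i) * (if i ∈ M.EC e ∧ ν ∈ M.EV e then M.t e ν * M.n e i else 0) := by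
      intro e; split_ifs <;> ring
    rw [Finset.sum_congr rfl fun e _ => this e, ← Finset.mul_sum, ← Finset.sum_filter,
      hsc i ν, mul_zero]
  rw [Finset.sum_congr rfl fun ν _ => hz ν]
  simp

/-- the linear map `(ψ, φ) ↦ (∇̃⊥ψ + ∇φ, Σ A_i φ_i)` -/
def helmMap (M : StagMesh C V E) : ((V → ℝ) × (C → ℝ)) →ₗ[ℝ] ((E → ℝ) × ℝ) where
  toFun p := (M.skewGrad p.1 + M.grad p.2, ∑ i, M.Ac i * p.2 i)
  map_add' p q := by
    refine Prod.ext ?_ ?_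
    · funext e
      simp [StagMesh.skewGrad, StagMesh.grad, mul_add, Finset.sum_add_distrib]
      ring
    · simp [mul_add, Finset.sum_add_distrib]
  map_smul' c p := by
    refine Prod.ext ?_ ?_
    · funext e
      have e1 : ∑ ν ∈ M.EV e, M.t e ν * (c • p.1) ν = c * ∑ ν ∈ M.EV e, M.t e ν * p.1 ν := by
        rw [Finset.mul_sum]
        exact Finset.sum_congr rfl fun ν _ => by simp; ring
      have e2 : ∑ i ∈ M.EC e, M.n e i * (c • p.2) i = c * ∑ i ∈ M.EC e, M.n e i * p.2 i := by
        rw [Finset.mul_sum]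
        exact Finset.sum_congr rfl fun i _ => by simp; ring
      show M.skewGrad (c • p.1) e + M.grad (c • p.2) e
          = c * (M.skewGrad p.1 e + M.grad p.2 e)
      simp only [StagMesh.skewGrad, StagMesh.grad, e1, e2]
      ring
    · show (∑ i, M.Ac i * (c • p.2) i) = c * ∑ i, M.Ac i * p.2 i
      rw [Finset.mul_sum]
      exact Finset.sum_congr rfl fun i _ => by simp; ring

lemma helmMap_injective (M : StagMesh C V E) (hsc : M.SgnCancel)
    (hks : ∀ ψ : V → ℝ, M.skewGrad ψ = 0 → ψ = 0)
    (hkg : ∀ φ : C → ℝ, M.grad φ = 0 → ∀ i j : C, φ i = φ j) :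
    Function.Injective (helmMap M) := by
  rw [← LinearMap.ker_eq_bot, LinearMap.ker_eq_bot']
  intro p hp
  obtain ⟨ψ, φ⟩ := p
  have h1 : M.skewGrad ψ + M.grad φ = 0 := congrArg Prod.fst hp
  have h2 : (∑ i, M.Ac i * φ i) = 0 := congrArg Prod.snd hp
  -- skewGrad ψ ⊥ grad φ, and their sum is 0, so skewGrad ψ = 0
  have horth := helm_orth M hsc ψ φ
  have hEn : M.innerE (M.skewGrad ψ) (M.skewGrad ψ) = 0 := by
    have : M.innerE (M.skewGrad ψ) (M.skewGrad ψ) + M.innerE (M.skewGrad ψ) (M.grad φ)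
        = M.innerE (M.skewGrad ψ) (M.skewGrad ψ + M.grad φ) := by
      simp [StagMesh.innerE, ← Finset.sum_add_distrib]
      exact Finset.sum_congr rfl fun e _ => by simp [mul_add]
    rw [horth, add_zero] at this
    rw [this, h1]
    simp [StagMesh.innerE]
  have hsg : M.skewGrad ψ = 0 := by
    funext e
    have hA : 0 < M.Ae e := by
      have := M.l_pos e; have := M.d_pos e
      simp only [StagMesh.Ae]; positivity
    have hnn : ∀ f ∈ (Finset.univ : Finset E),
        0 ≤ M.Ae f * M.skewGrad ψ f * M.skewGrad ψ f := by
      intro f _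
      have hAf : 0 < M.Ae f := by
        have := M.l_pos f; have := M.d_pos f
        simp only [StagMesh.Ae]; positivity
      nlinarith [mul_self_nonneg (M.skewGrad ψ f)]
    have hz := (Finset.sum_eq_zero_iff_of_nonneg hnn).mp hEn e (Finset.mem_univ e)
    rw [mul_assoc] at hz
    have h0 := (mul_eq_zero.mp hz).resolve_left hA.ne'
    simpa using mul_self_eq_zero.mp h0
  have hψ : ψ = 0 := hks ψ hsg
  have hgr : M.grad φ = 0 := by
    have := h1; rw [hsg, zero_add] at this; exact this
  have hφc := hkg φ hgr
  have hφ : φ = 0 := by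
    by_cases hC : Nonempty C
    · obtain ⟨i0⟩ := hC
      have hsum : (∑ i, M.Ac i * φ i) = (∑ i, M.Ac i) * φ i0 := by
        rw [Finset.sum_mul]
        exact Finset.sum_congr rfl fun i _ => by rw [hφc i i0]
      have hpos : 0 < ∑ i, M.Ac i :=
        Finset.sum_pos (fun i _ => M.Ac_pos i) ⟨i0, Finset.mem_univ i0⟩
      have : φ i0 = 0 := by
        have := h2; rw [hsum] at this
        exact (mul_eq_zero.mp this).resolve_left hpos.ne'
      funext i; rw [hφc i i0, this]; rfl
    · funext i; exact absurd ⟨i⟩ hC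
  rw [hψ, hφ]; rfl

end HelmholtzAux

/-- discrete Helmholtz decomposition: under the sign-cancellation
condition, the Euler relation, injectivity of the skew gradient and constancy of
the gradient kernel, every discrete vector field `u` has a unique decomposition
`u = ∇̃⊥_h ψ + ∇_h φ` with `Σ A_i φ_i = 0`. -/
theorem discrete_helmholtz
    {C V E : Type} [Fintype C] [Fintype V] [Fintype E]
    [DecidableEq C] [DecidableEq V]
    (M : StagMesh C V E)
    (hsc : M.SgnCancel)
    (heuler : Fintype.card C + Fintype.card V = Fintype.card E + 1)
    (hks : ∀ ψ : V → ℝ, M.skewGrad ψ = 0 → ψ = 0)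
    (hkg : ∀ φ : C → ℝ, M.grad φ = 0 → ∀ i j : C, φ i = φ j)
    (u : E → ℝ) :
    ∃! p : (V → ℝ) × (C → ℝ),
      (∑ i, M.Ac i * p.2 i) = 0 ∧ u = M.skewGrad p.1 + M.grad p.2 := by
  classical
  have hdim : Module.finrank ℝ ((V → ℝ) × (C → ℝ)) = Module.finrank ℝ ((E → ℝ) × ℝ) := by
    simp [Module.finrank_prod, Module.finrank_pi]
    omega
  have hinj := helmMap_injective M hsc hks hkg
  have hsurj : Function.Surjective (helmMap M) :=
    (LinearMap.injective_iff_surjective_of_finrank_eq_finrank hdim).mp hinj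
  obtain ⟨p, hp⟩ := hsurj (u, 0)
  refine ⟨p, ⟨?_, ?_⟩, ?_⟩
  · exact congrArg Prod.snd hp
  · exact (congrArg Prod.fst hp).symm
  · rintro q ⟨hq1, hq2⟩
    apply hinj
    rw [hp]
    refine Prod.ext ?_ ?_
    · exact hq2.symm
    · exact hq1
end
end

section
/- Orthogonal decomposition of discrete vector fields (Lemma 2.5): assume (SgnCancel): for every primary cell i and every vertex ν, the sum of t_{e,ν}·n_{e,i} over all edges e incident to both i and ν equals 0; (Euler): card C + card V = card E + 1; (KerSkew): the only dual scalar field ψ with ∇̃⊥_h ψ = 0 is ψ = 0; and (KerGrad): every primary scalar field φ with ∇_h φ = 0 is constant. Then the subspaces {u ∈ ℝ^E : ∇_h·u = 0} and {u ∈ ℝ^E : ∇̃_h×u = 0} of the space of discrete vector fields are orthogonal with respect to the diamond-weighted inner product (u, u')_0 = Σ_{e∈E} A_e u_e u'_e, and their direct sum is the whole space ℝ^E. -/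
/-!
Summation by parts gives `(u, ∇φ)₀ = -½ (∇·u, φ)` and `(∇̃⊥ψ, u)₀ = -½ (ψ, ∇̃×u)`, and the sign
cancellation makes every skew gradient orthogonal to every gradient. By the kernel assumptions the
ranges of `∇̃⊥` and `∇` have dimensions `|V|` and at least `|C| - 1`, which by Euler's formula add
up to `|E|`, so they are complementary. A divergence-free gradient or a curl-free skew gradient has
zero norm; hence the divergence-free fields are exactly the skew gradients and the curl-free fields
exactly the gradients.
-/

open Finset

noncomputable section

open StagMesh

theorem Fintype.eq_zero_of_sum_weighted_mul_self_eq_zero {ι R : Type*} [Fintype ι] [Ring R]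
    [LinearOrder R] [IsStrictOrderedRing R] {w f : ι → R} (hw : ∀ i, 0 < w i)
    (h : ∑ i, w i * f i * f i = 0) : f = 0 := by
  have hnonneg : ∀ i ∈ univ, 0 ≤ w i * f i * f i := fun i _ => by
    simpa only [mul_assoc] using mul_nonneg (hw i).le (mul_self_nonneg (f i))
  funext i
  have hi : w i * (f i * f i) = 0 := by
    simpa only [mul_assoc] using (Finset.sum_eq_zero_iff_of_nonneg hnonneg).mp h i (mem_univ i)
  exact mul_self_eq_zero.mp ((mul_eq_zero.mp hi).resolve_left (hw i).ne')

theorem Pi.mem_span_one_of_forall_eq {ι K : Type*} [Semiring K] {φ : ι → K}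
    (h : ∀ i j, φ i = φ j) : φ ∈ Submodule.span K {1} := by
  rcases isEmpty_or_nonempty ι with _ | ⟨⟨j⟩⟩
  · rw [Subsingleton.elim φ 0]; exact Submodule.zero_mem _
  · exact Submodule.mem_span_singleton.mpr ⟨φ j, funext fun i => by simp [h i j]⟩

namespace StagMesh

variable {C V E : Type} [Fintype C] [Fintype V] [Fintype E] [DecidableEq C] [DecidableEq V]
  (M : StagMesh C V E)

theorem Ae_pos (e : E) : 0 < M.Ae e := by
  have := M.l_pos e; have := M.d_pos e
  unfold Ae; positivity

theorem eq_zero_of_innerE_self_eq_zero {u : E → ℝ} (h : M.innerE u u = 0) : u = 0 :=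
  Fintype.eq_zero_of_sum_weighted_mul_self_eq_zero M.Ae_pos h

theorem eq_zero_of_innerC_self_eq_zero {φ : C → ℝ} (h : M.innerC φ φ = 0) : φ = 0 :=
  Fintype.eq_zero_of_sum_weighted_mul_self_eq_zero M.Ac_pos h

theorem eq_zero_of_innerV_self_eq_zero {ψ : V → ℝ} (h : M.innerV ψ ψ = 0) : ψ = 0 :=
  Fintype.eq_zero_of_sum_weighted_mul_self_eq_zero M.Av_pos h

def gradₗ : (C → ℝ) →ₗ[ℝ] (E → ℝ) where
  toFun := M.grad
  map_add' φ φ' := by funext e; simp only [grad, Pi.add_apply, mul_add, sum_add_distrib]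
  map_smul' c φ := by
    funext e; simp only [grad, Pi.smul_apply, smul_eq_mul, mul_left_comm _ c, ← mul_sum]; simp

def skewGradₗ : (V → ℝ) →ₗ[ℝ] (E → ℝ) where
  toFun := M.skewGrad
  map_add' ψ ψ' := by funext e; simp only [skewGrad, Pi.add_apply, mul_add, sum_add_distrib]
  map_smul' c ψ := by
    funext e; simp only [skewGrad, Pi.smul_apply, smul_eq_mul, mul_left_comm _ c, ← mul_sum]; simp

def dvgₗ : (E → ℝ) →ₗ[ℝ] (C → ℝ) where
  toFun := M.dvg
  map_add' u u' := by funext i; simp only [dvg, Pi.add_apply, mul_add, sum_add_distrib]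
  map_smul' c u := by
    funext i; simp only [dvg, Pi.smul_apply, smul_eq_mul, mul_left_comm _ c, ← mul_sum]; simp

def curlₗ : (E → ℝ) →ₗ[ℝ] (V → ℝ) where
  toFun := M.curl
  map_add' u u' := by funext ν; simp only [curl, Pi.add_apply, mul_add, sum_add_distrib]
  map_smul' c u := by
    funext ν; simp only [curl, Pi.smul_apply, smul_eq_mul, mul_left_comm _ c, ← mul_sum]; simp

theorem innerE_grad (u : E → ℝ) (φ : C → ℝ) :
    M.innerE u (M.grad φ) = -(1 / 2) * M.innerC (M.dvg u) φ := by
  calc M.innerE u (M.grad φ)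
      = ∑ e, ∑ i ∈ M.EC e, -(1 / 2) * (M.l e * M.n e i * u e) * φ i := by
        refine sum_congr rfl fun e _ => ?_
        have := (M.d_pos e).ne'
        simp only [Ae, grad, mul_sum]
        exact sum_congr rfl fun i _ => by field_simp
    _ = ∑ i, ∑ e ∈ univ.filter (fun e => i ∈ M.EC e),
          -(1 / 2) * (M.l e * M.n e i * u e) * φ i := sum_comm' (by simp)
    _ = -(1 / 2) * M.innerC (M.dvg u) φ := by
        rw [innerC, mul_sum]
        refine sum_congr rfl fun i _ => ?_
        have := (M.Ac_pos i).ne'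
        simp only [dvg]
        rw [← sum_mul, ← mul_sum]
        field_simp

theorem innerE_skewGrad (ψ : V → ℝ) (u : E → ℝ) :
    M.innerE (M.skewGrad ψ) u = -(1 / 2) * M.innerV ψ (M.curl u) := by
  calc M.innerE (M.skewGrad ψ) u
      = ∑ e, ∑ ν ∈ M.EV e, (1 / 2) * (M.d e * M.t e ν * u e) * ψ ν := by
        refine sum_congr rfl fun e _ => ?_
        have := (M.l_pos e).ne'
        simp only [Ae, skewGrad, mul_sum, sum_mul]
        exact sum_congr rfl fun ν _ => by field_simp
    _ = ∑ ν, ∑ e ∈ univ.filter (fun e => ν ∈ M.EV e),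
          (1 / 2) * (M.d e * M.t e ν * u e) * ψ ν := sum_comm' (by simp)
    _ = -(1 / 2) * M.innerV ψ (M.curl u) := by
        rw [innerV, mul_sum]
        refine sum_congr rfl fun ν _ => ?_
        have := (M.Av_pos ν).ne'
        simp only [curl]
        rw [← sum_mul, ← mul_sum]
        field_simp

theorem innerE_skewGrad_grad (hsc : M.SgnCancel) (ψ : V → ℝ) (φ : C → ℝ) :
    M.innerE (M.skewGrad ψ) (M.grad φ) = 0 := by
  calc M.innerE (M.skewGrad ψ) (M.grad φ)
      = ∑ e, ∑ ν ∈ M.EV e, ∑ i ∈ M.EC e,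
          -(1 / 2) * ψ ν * φ i * (M.t e ν * M.n e i) := by
        refine sum_congr rfl fun e _ => ?_
        have := (M.l_pos e).ne'
        have := (M.d_pos e).ne'
        simp only [Ae, skewGrad, grad, mul_sum, sum_mul]
        rw [sum_comm]
        exact sum_congr rfl fun ν _ => sum_congr rfl fun i _ => by field_simp
    _ = ∑ ν, ∑ i, ∑ e ∈ univ.filter (fun e => i ∈ M.EC e ∧ ν ∈ M.EV e),
          -(1 / 2) * ψ ν * φ i * (M.t e ν * M.n e i) := by
        rw [sum_comm' (t' := univ) (s' := fun ν => univ.filter (fun e => ν ∈ M.EV e)) (by simp)]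
        refine sum_congr rfl fun ν _ => sum_comm' (by simp [and_comm])
    _ = 0 := by
        unfold SgnCancel at hsc
        simp only [← mul_sum, hsc, mul_zero, sum_const_zero]

theorem curl_grad (hsc : M.SgnCancel) (φ : C → ℝ) : M.curl (M.grad φ) = 0 := by
  refine M.eq_zero_of_innerV_self_eq_zero ?_
  have := M.innerE_skewGrad (M.curl (M.grad φ)) (M.grad φ)
  rw [M.innerE_skewGrad_grad hsc] at this
  linarith

theorem dvg_skewGrad (hsc : M.SgnCancel) (ψ : V → ℝ) : M.dvg (M.skewGrad ψ) = 0 := by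
  refine M.eq_zero_of_innerC_self_eq_zero ?_
  have := M.innerE_grad (M.skewGrad ψ) (M.dvg (M.skewGrad ψ))
  rw [M.innerE_skewGrad_grad hsc] at this
  linarith

theorem disjoint_range_gradₗ_ker_dvgₗ :
    Disjoint (LinearMap.range M.gradₗ) (LinearMap.ker M.dvgₗ) := by
  rw [Submodule.disjoint_def]
  rintro _ ⟨φ, rfl⟩ hu
  refine M.eq_zero_of_innerE_self_eq_zero ?_
  change M.innerE (M.grad φ) (M.grad φ) = 0
  rw [M.innerE_grad, show M.dvg (M.grad φ) = 0 from hu]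
  simp [innerC]

theorem disjoint_range_skewGradₗ_ker_curlₗ :
    Disjoint (LinearMap.range M.skewGradₗ) (LinearMap.ker M.curlₗ) := by
  rw [Submodule.disjoint_def]
  rintro _ ⟨ψ, rfl⟩ hu
  refine M.eq_zero_of_innerE_self_eq_zero ?_
  change M.innerE (M.skewGrad ψ) (M.skewGrad ψ) = 0
  rw [M.innerE_skewGrad, show M.curl (M.skewGrad ψ) = 0 from hu]
  simp [innerV]

theorem finrank_range_skewGradₗ (hks : ∀ ψ : V → ℝ, M.skewGrad ψ = 0 → ψ = 0) :
    Module.finrank ℝ (LinearMap.range M.skewGradₗ) = Fintype.card V := by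
  rw [LinearMap.finrank_range_of_inj, Module.finrank_fintype_fun_eq_card]
  exact (injective_iff_map_eq_zero _).mpr hks

theorem card_le_finrank_range_gradₗ_add_one
    (hkg : ∀ φ : C → ℝ, M.grad φ = 0 → ∀ i j : C, φ i = φ j) :
    Fintype.card C ≤ Module.finrank ℝ (LinearMap.range M.gradₗ) + 1 := by
  have hker : LinearMap.ker M.gradₗ ≤ Submodule.span ℝ {1} := fun φ hφ =>
    Pi.mem_span_one_of_forall_eq (hkg φ hφ)
  have hker_le : Module.finrank ℝ (LinearMap.ker M.gradₗ) ≤ 1 :=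
    (Submodule.finrank_mono hker).trans ((finrank_span_le_card _).trans (by simp))
  have := LinearMap.finrank_range_add_finrank_ker M.gradₗ
  rw [Module.finrank_fintype_fun_eq_card] at this
  omega

theorem range_skewGradₗ_le_ker_dvgₗ (hsc : M.SgnCancel) :
    LinearMap.range M.skewGradₗ ≤ LinearMap.ker M.dvgₗ := by
  rintro _ ⟨ψ, rfl⟩
  exact M.dvg_skewGrad hsc ψ

theorem range_gradₗ_le_ker_curlₗ (hsc : M.SgnCancel) :
    LinearMap.range M.gradₗ ≤ LinearMap.ker M.curlₗ := by
  rintro _ ⟨φ, rfl⟩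
  exact M.curl_grad hsc φ

theorem isCompl_range_skewGradₗ_range_gradₗ (hsc : M.SgnCancel)
    (heuler : Fintype.card C + Fintype.card V = Fintype.card E + 1)
    (hks : ∀ ψ : V → ℝ, M.skewGrad ψ = 0 → ψ = 0)
    (hkg : ∀ φ : C → ℝ, M.grad φ = 0 → ∀ i j : C, φ i = φ j) :
    IsCompl (LinearMap.range M.skewGradₗ) (LinearMap.range M.gradₗ) := by
  have hdisj : Disjoint (LinearMap.range M.skewGradₗ) (LinearMap.range M.gradₗ) :=
    (M.disjoint_range_gradₗ_ker_dvgₗ.mono_right (M.range_skewGradₗ_le_ker_dvgₗ hsc)).symm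
  refine ⟨hdisj, codisjoint_iff.mpr (Submodule.eq_top_of_disjoint _ _ ?_ hdisj)⟩
  have := M.card_le_finrank_range_gradₗ_add_one hkg
  rw [Module.finrank_fintype_fun_eq_card, M.finrank_range_skewGradₗ hks]
  omega

theorem ker_dvgₗ (hsc : M.SgnCancel)
    (heuler : Fintype.card C + Fintype.card V = Fintype.card E + 1)
    (hks : ∀ ψ : V → ℝ, M.skewGrad ψ = 0 → ψ = 0)
    (hkg : ∀ φ : C → ℝ, M.grad φ = 0 → ∀ i j : C, φ i = φ j) :
    LinearMap.ker M.dvgₗ = LinearMap.range M.skewGradₗ :=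
  ((le_iff_eq_of_codisjoint_of_disjoint
    (M.isCompl_range_skewGradₗ_range_gradₗ hsc heuler hks hkg).codisjoint
    M.disjoint_range_gradₗ_ker_dvgₗ).mp (M.range_skewGradₗ_le_ker_dvgₗ hsc)).symm

theorem ker_curlₗ (hsc : M.SgnCancel)
    (heuler : Fintype.card C + Fintype.card V = Fintype.card E + 1)
    (hks : ∀ ψ : V → ℝ, M.skewGrad ψ = 0 → ψ = 0)
    (hkg : ∀ φ : C → ℝ, M.grad φ = 0 → ∀ i j : C, φ i = φ j) :
    LinearMap.ker M.curlₗ = LinearMap.range M.gradₗ :=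
  ((le_iff_eq_of_codisjoint_of_disjoint
    (M.isCompl_range_skewGradₗ_range_gradₗ hsc heuler hks hkg).codisjoint.symm
    M.disjoint_range_skewGradₗ_ker_curlₗ).mp (M.range_gradₗ_le_ker_curlₗ hsc)).symm

end StagMesh

/-- orthogonal decomposition of discrete vector fields: the
divergence-free fields and the curl-free fields are orthogonal for the
diamond-weighted inner product, and every discrete vector field splits uniquely
as the sum of a divergence-free and a curl-free field. -/
theorem orthogonal_decomposition
    {C V E : Type} [Fintype C] [Fintype V] [Fintype E]
    [DecidableEq C] [DecidableEq V]
    (M : StagMesh C V E)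
    (hsc : M.SgnCancel)
    (heuler : Fintype.card C + Fintype.card V = Fintype.card E + 1)
    (hks : ∀ ψ : V → ℝ, M.skewGrad ψ = 0 → ψ = 0)
    (hkg : ∀ φ : C → ℝ, M.grad φ = 0 → ∀ i j : C, φ i = φ j) :
    (∀ u u' : E → ℝ, M.dvg u = 0 → M.curl u' = 0 → M.innerE u u' = 0) ∧
    (∀ u : E → ℝ, ∃! p : (E → ℝ) × (E → ℝ),
      M.dvg p.1 = 0 ∧ M.curl p.2 = 0 ∧ u = p.1 + p.2) := by
  have hdvg := M.ker_dvgₗ hsc heuler hks hkg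
  have hcurl := M.ker_curlₗ hsc heuler hks hkg
  refine ⟨fun u u' hu hu' => ?_, fun u => ?_⟩
  · obtain ⟨ψ, rfl⟩ : u ∈ LinearMap.range M.skewGradₗ := hdvg ▸ hu
    obtain ⟨φ, rfl⟩ : u' ∈ LinearMap.range M.gradₗ := hcurl ▸ hu'
    exact M.innerE_skewGrad_grad hsc ψ φ
  · have hcompl : IsCompl (LinearMap.ker M.dvgₗ) (LinearMap.ker M.curlₗ) :=
      hdvg ▸ hcurl ▸ M.isCompl_range_skewGradₗ_range_gradₗ hsc heuler hks hkg
    obtain ⟨⟨v, hv⟩, ⟨w, hw⟩, hsum, huniq⟩ :=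
      Submodule.existsUnique_add_of_isCompl hcompl u
    refine ⟨(v, w), ⟨hv, hw, hsum.symm⟩, fun ⟨v', w'⟩ ⟨hv', hw', hu⟩ => ?_⟩
    obtain ⟨h₁, h₂⟩ := huniq ⟨v', hv'⟩ ⟨w', hw'⟩ hu.symm
    exact Prod.ext (congrArg Subtype.val h₁) (congrArg Subtype.val h₂)
end
end

section
/- Discrete divergence-free fields are skew gradients (Lemma 2.3, necessity): assume (SgnCancel): for every primary cell i and every vertex ν, the sum of t_{e,ν}·n_{e,i} over all edges e incident to both i and ν equals 0; (Euler): card C + card V = card E + 1; (KerSkew): the only dual scalar field ψ with ∇̃⊥_h ψ = 0 is ψ = 0; and (KerGrad): every primary scalar field φ with ∇_h φ = 0 is constant. Then every discrete vector field u with ∇_h·u = 0 can be written as u = ∇̃⊥_h ψ for a unique dual discrete scalar field ψ. -/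
open Finset

noncomputable section

open StagMesh

/-!
Let `N : Matrix E C ℝ` and `T : Matrix E V ℝ` be the signed edge–cell and edge–vertex incidence
matrices. Up to invertible diagonal scalings, `∇_h`, `∇̃⊥_h` and `∇_h·` are `N`, `T` and `Nᵀ`,
and (SgnCancel) says exactly `Nᵀ * T = 0`, so `range T ≤ ker Nᵀ`. By (KerSkew) `T` is injective,
and by (KerGrad) `rank N ≥ |C| - 1`; hence
`dim ker Nᵀ = |E| - rank N ≤ |E| - |C| + 1 = |V| = dim range T` by (Euler), and `range T = ker Nᵀ`.
-/

namespace Matrix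

variable {K m n p : Type*} [Field K] [Fintype n]

theorem finrank_ker_mulVecLin_le_one (A : Matrix m n K)
    (h : ∀ x, A *ᵥ x = 0 → ∀ i j, x i = x j) :
    Module.finrank K (LinearMap.ker A.mulVecLin) ≤ 1 := by
  have hker : LinearMap.ker A.mulVecLin ≤
      LinearMap.range (LinearMap.toSpanSingleton K (n → K) fun _ => 1) := by
    intro x hx
    rcases isEmpty_or_nonempty n with hn | ⟨⟨j⟩⟩
    · exact ⟨0, Subsingleton.elim _ _⟩
    · exact ⟨x j, funext fun i => by simpa using (h x hx i j).symm⟩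
  calc Module.finrank K (LinearMap.ker A.mulVecLin)
      ≤ Module.finrank K (LinearMap.range (LinearMap.toSpanSingleton K (n → K) fun _ => 1)) :=
        Submodule.finrank_mono hker
    _ ≤ 1 := (LinearMap.finrank_range_le _).trans (Module.finrank_self K).le

theorem range_mulVecLin_eq_ker_transpose [Fintype m] [Fintype p]
    (N : Matrix m n K) (T : Matrix m p K)
    (hNT : Nᵀ * T = 0) (hT : LinearMap.ker T.mulVecLin = ⊥)
    (hdim : Fintype.card m + Module.finrank K (LinearMap.ker N.mulVecLin) ≤
      Fintype.card n + Fintype.card p) :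
    LinearMap.range T.mulVecLin = LinearMap.ker Nᵀ.mulVecLin := by
  have hle : LinearMap.range T.mulVecLin ≤ LinearMap.ker Nᵀ.mulVecLin := by
    rintro _ ⟨ψ, rfl⟩
    rw [LinearMap.mem_ker, mulVecLin_apply, mulVecLin_apply, mulVec_mulVec, hNT, zero_mulVec]
  have hrangeT := LinearMap.finrank_range_add_finrank_ker T.mulVecLin
  have hrankNt := LinearMap.finrank_range_add_finrank_ker Nᵀ.mulVecLin
  have hrankN := LinearMap.finrank_range_add_finrank_ker N.mulVecLin
  have htr : Nᵀ.rank = N.rank := rank_transpose N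
  rw [hT, finrank_bot, Module.finrank_pi] at hrangeT
  rw [Module.finrank_pi] at hrankNt hrankN
  unfold rank at htr
  exact Submodule.eq_of_le_of_finrank_le hle (by omega)

end Matrix

namespace StagMesh

open Matrix

variable {C V E : Type} [Fintype C] [Fintype V] [Fintype E] [DecidableEq C] [DecidableEq V]
  (M : StagMesh C V E)

def cellIncidence : Matrix E C ℝ := of fun e i => if i ∈ M.EC e then M.n e i else 0

def vertexIncidence : Matrix E V ℝ := of fun e ν => if ν ∈ M.EV e then M.t e ν else 0

theorem grad_apply (φ : C → ℝ) (e : E) :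
    M.grad φ e = -(1 / M.d e) * (M.cellIncidence *ᵥ φ) e := by
  simp [grad, cellIncidence, mulVec, dotProduct, ite_mul, Finset.sum_ite_mem]

theorem skewGrad_apply (ψ : V → ℝ) (e : E) :
    M.skewGrad ψ e = 1 / M.l e * (M.vertexIncidence *ᵥ ψ) e := by
  simp [skewGrad, vertexIncidence, mulVec, dotProduct, ite_mul, Finset.sum_ite_mem]

theorem dvg_apply (u : E → ℝ) (i : C) :
    M.dvg u i = 1 / M.Ac i * (M.cellIncidenceᵀ *ᵥ fun e => M.l e * u e) i := by
  simp [dvg, cellIncidence, mulVec, dotProduct, Finset.sum_filter, mul_left_comm, mul_assoc]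

theorem cellIncidence_transpose_mul_vertexIncidence (hsc : M.SgnCancel) :
    M.cellIncidenceᵀ * M.vertexIncidence = 0 := by
  ext i ν
  rw [Matrix.zero_apply, ← hsc i ν, Finset.sum_filter]
  simp only [mul_apply, transpose_apply, cellIncidence, vertexIncidence, of_apply]
  refine Finset.sum_congr rfl fun e _ => ?_
  split_ifs <;> simp_all [mul_comm]

theorem grad_eq_zero_iff (φ : C → ℝ) : M.grad φ = 0 ↔ M.cellIncidence *ᵥ φ = 0 := by
  simp only [funext_iff, grad_apply, Pi.zero_apply, mul_eq_zero, neg_eq_zero, one_div,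
    inv_eq_zero, (M.d_pos _).ne', false_or]

theorem dvg_eq_zero_iff (u : E → ℝ) :
    M.dvg u = 0 ↔ M.cellIncidenceᵀ *ᵥ (fun e => M.l e * u e) = 0 := by
  simp only [funext_iff, dvg_apply, Pi.zero_apply, mul_eq_zero, one_div, inv_eq_zero,
    (M.Ac_pos _).ne', false_or]

theorem eq_skewGrad_iff (u : E → ℝ) (ψ : V → ℝ) :
    u = M.skewGrad ψ ↔ M.vertexIncidence *ᵥ ψ = fun e => M.l e * u e := by
  simp only [funext_iff, skewGrad_apply]
  refine forall_congr' fun e => ?_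
  field_simp [(M.l_pos e).ne']
  exact eq_comm

theorem ker_vertexIncidence_eq_bot (hks : ∀ ψ : V → ℝ, M.skewGrad ψ = 0 → ψ = 0) :
    LinearMap.ker M.vertexIncidence.mulVecLin = ⊥ := by
  refine LinearMap.ker_eq_bot'.2 fun ψ hψ => hks ψ ?_
  funext e
  simp [skewGrad_apply, show M.vertexIncidence *ᵥ ψ = 0 from hψ]

end StagMesh

/-- discrete divergence-free fields are skew gradients: under the
standing mesh hypotheses, every discrete vector field `u` with `∇_h·u = 0` is
`∇̃⊥_h ψ` for a unique dual scalar field `ψ`. -/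
theorem divFree_is_skewGrad
    {C V E : Type} [Fintype C] [Fintype V] [Fintype E]
    [DecidableEq C] [DecidableEq V]
    (M : StagMesh C V E)
    (hsc : M.SgnCancel)
    (heuler : Fintype.card C + Fintype.card V = Fintype.card E + 1)
    (hks : ∀ ψ : V → ℝ, M.skewGrad ψ = 0 → ψ = 0)
    (hkg : ∀ φ : C → ℝ, M.grad φ = 0 → ∀ i j : C, φ i = φ j)
    (u : E → ℝ) (hu : M.dvg u = 0) :
    ∃! ψ : V → ℝ, u = M.skewGrad ψ := by
  have hkerN : Module.finrank ℝ (LinearMap.ker M.cellIncidence.mulVecLin) ≤ 1 :=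
    M.cellIncidence.finrank_ker_mulVecLin_le_one fun φ hφ =>
      hkg φ ((M.grad_eq_zero_iff φ).2 hφ)
  have hT := M.ker_vertexIncidence_eq_bot hks
  have hexact := Matrix.range_mulVecLin_eq_ker_transpose M.cellIncidence M.vertexIncidence
    (M.cellIncidence_transpose_mul_vertexIncidence hsc) hT (by omega)
  obtain ⟨ψ, hψ⟩ : (fun e => M.l e * u e) ∈ LinearMap.range M.vertexIncidence.mulVecLin :=
    hexact ▸ (M.dvg_eq_zero_iff u).1 hu
  refine ⟨ψ, (M.eq_skewGrad_iff u ψ).2 hψ, fun ψ' hψ' => ?_⟩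
  exact LinearMap.ker_eq_bot.1 hT (((M.eq_skewGrad_iff u ψ').1 hψ').trans hψ.symm)
end
end

section
/- Discrete Poincaré inequality for vector fields (Lemma 2.6): assume (SgnCancel): for every primary cell i and every vertex ν, the sum of t_{e,ν}·n_{e,i} over all edges e incident to both i and ν equals 0; (Euler): card C + card V = card E + 1; (KerSkew): the only dual scalar field ψ with ∇̃⊥_h ψ = 0 is ψ = 0; (KerGrad): every primary scalar field φ with ∇_h φ = 0 is constant; and the discrete Poincaré inequalities for scalar fields with constants C₁, C₂ > 0 (|φ|_0 ≤ C₁ |∇_h φ|_0 for zero-weighted-mean φ, and |ψ|_0 ≤ C₂ |∇̃⊥_h ψ|_0 for all ψ). Then every discrete vector field u satisfies |u|_0 ≤ (max(C₁, C₂)/2) · (|∇_h·u|_0² + |∇̃_h×u|_0²)^{1/2}, where |u|_0² = Σ_{e∈E} A_e u_e², |∇_h·u|_0² = Σ_{i∈C} A_i ([∇_h·u]_i)², and |∇̃_h×u|_0² = Σ_{ν∈V} A_ν ([∇̃_h×u]_ν)². -/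
open Finset

noncomputable section

open StagMesh

namespace StagPoincareAux

open StagMesh Finset

variable {C V E : Type} [Fintype C] [Fintype V] [Fintype E]
  [DecidableEq C] [DecidableEq V] (M : StagMesh C V E)

lemma Ae_pos (e : E) : 0 < M.Ae e := by
  unfold StagMesh.Ae
  have h1 := M.l_pos e
  have h2 := M.d_pos e
  positivity

lemma innerE_nonneg (u : E → ℝ) : 0 ≤ M.innerE u u :=
  Finset.sum_nonneg fun e _ => by
    rw [mul_assoc]; exact mul_nonneg (Ae_pos M e).le (mul_self_nonneg _)

lemma innerC_nonneg (φ : C → ℝ) : 0 ≤ M.innerC φ φ :=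
  Finset.sum_nonneg fun i _ => by
    rw [mul_assoc]; exact mul_nonneg (M.Ac_pos i).le (mul_self_nonneg _)

lemma innerV_nonneg (ψ : V → ℝ) : 0 ≤ M.innerV ψ ψ :=
  Finset.sum_nonneg fun ν _ => by
    rw [mul_assoc]; exact mul_nonneg (M.Av_pos ν).le (mul_self_nonneg _)

lemma sq_normE (u : E → ℝ) : M.normE u ^ 2 = M.innerE u u :=
  Real.sq_sqrt (innerE_nonneg M u)

lemma sq_normC (φ : C → ℝ) : M.normC φ ^ 2 = M.innerC φ φ :=
  Real.sq_sqrt (innerC_nonneg M φ)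

lemma sq_normV (ψ : V → ℝ) : M.normV ψ ^ 2 = M.innerV ψ ψ :=
  Real.sq_sqrt (innerV_nonneg M ψ)

lemma innerE_self_eq_zero {u : E → ℝ} (h : M.innerE u u = 0) : u = 0 := by
  have hnn : ∀ e ∈ (univ : Finset E), 0 ≤ M.Ae e * u e * u e := fun e _ => by
    rw [mul_assoc]; exact mul_nonneg (Ae_pos M e).le (mul_self_nonneg _)
  funext e
  have h0 := (Finset.sum_eq_zero_iff_of_nonneg hnn).mp h e (mem_univ e)
  have := (Ae_pos M e).ne'
  have : u e * u e = 0 := by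
    rcases mul_eq_zero.mp h0 with h' | h'
    · rcases mul_eq_zero.mp h' with h'' | h''
      · exact absurd h'' this
      · rw [h'']; ring
    · rw [h']; ring
  simpa [mul_self_eq_zero] using this

lemma innerE_add_left (a b c : E → ℝ) :
    M.innerE (a + b) c = M.innerE a c + M.innerE b c := by
  unfold StagMesh.innerE
  rw [← Finset.sum_add_distrib]
  exact Finset.sum_congr rfl fun e _ => by simp [Pi.add_apply]; ring

lemma innerE_add_right (a b c : E → ℝ) :
    M.innerE a (b + c) = M.innerE a b + M.innerE a c := by
  unfold StagMesh.innerE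
  rw [← Finset.sum_add_distrib]
  exact Finset.sum_congr rfl fun e _ => by simp [Pi.add_apply]; ring

lemma innerE_symm (a b : E → ℝ) : M.innerE a b = M.innerE b a :=
  Finset.sum_congr rfl fun e _ => by ring

lemma innerE_expand (a b : E → ℝ) :
    M.innerE (a + b) (a + b)
      = M.innerE a a + 2 * M.innerE a b + M.innerE b b := by
  rw [innerE_add_left, innerE_add_right, innerE_add_right, innerE_symm M b a]
  ring

/-- integration by parts for the gradient -/
lemma ibp_grad (u : E → ℝ) (φ : C → ℝ) :
    M.innerE u (M.grad φ) = -(1/2) * M.innerC (M.dvg u) φ := by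
  have step1 : M.innerE u (M.grad φ)
      = ∑ e, ∑ i ∈ M.EC e, (-(1/2)) * (M.l e * M.n e i * u e * φ i) := by
    refine Finset.sum_congr rfl fun e _ => ?_
    have hd := (M.d_pos e).ne'
    calc M.Ae e * u e * M.grad φ e
        = (-(1/2) * M.l e * u e) * ∑ i ∈ M.EC e, M.n e i * φ i := by
          unfold StagMesh.grad StagMesh.Ae
          field_simp
      _ = ∑ i ∈ M.EC e, (-(1/2)) * (M.l e * M.n e i * u e * φ i) := by
          rw [Finset.mul_sum]
          exact Finset.sum_congr rfl fun i _ => by ring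
  have step2 : (∑ e, ∑ i ∈ M.EC e, (-(1/2)) * (M.l e * M.n e i * u e * φ i))
      = ∑ i, ∑ e ∈ univ.filter (fun e => i ∈ M.EC e),
          (-(1/2)) * (M.l e * M.n e i * u e * φ i) :=
    Finset.sum_comm' (by simp)
  rw [step1, step2]
  unfold StagMesh.innerC StagMesh.dvg
  rw [Finset.mul_sum]
  refine Finset.sum_congr rfl fun i _ => ?_
  have hA := (M.Ac_pos i).ne'
  calc (∑ e ∈ univ.filter (fun e => i ∈ M.EC e),
          (-(1/2)) * (M.l e * M.n e i * u e * φ i))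
      = (-(1/2) * φ i) * ∑ e ∈ univ.filter (fun e => i ∈ M.EC e),
          M.l e * M.n e i * u e := by
        rw [Finset.mul_sum]
        exact Finset.sum_congr rfl fun e _ => by ring
    _ = -(1/2) * (M.Ac i * ((1 / M.Ac i) *
          ∑ e ∈ univ.filter (fun e => i ∈ M.EC e), M.l e * M.n e i * u e) * φ i) := by
        field_simp

/-- integration by parts for the skew gradient -/
lemma ibp_skew (u : E → ℝ) (ψ : V → ℝ) :
    M.innerE u (M.skewGrad ψ) = -(1/2) * M.innerV (M.curl u) ψ := by
  have step1 : M.innerE u (M.skewGrad ψ)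
      = ∑ e, ∑ ν ∈ M.EV e, (1/2) * (M.d e * M.t e ν * u e * ψ ν) := by
    refine Finset.sum_congr rfl fun e _ => ?_
    have hl := (M.l_pos e).ne'
    calc M.Ae e * u e * M.skewGrad ψ e
        = ((1/2) * M.d e * u e) * ∑ ν ∈ M.EV e, M.t e ν * ψ ν := by
          unfold StagMesh.skewGrad StagMesh.Ae
          field_simp
      _ = ∑ ν ∈ M.EV e, (1/2) * (M.d e * M.t e ν * u e * ψ ν) := by
          rw [Finset.mul_sum]
          exact Finset.sum_congr rfl fun ν _ => by ring
  have step2 : (∑ e, ∑ ν ∈ M.EV e, (1/2) * (M.d e * M.t e ν * u e * ψ ν))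
      = ∑ ν, ∑ e ∈ univ.filter (fun e => ν ∈ M.EV e),
          (1/2) * (M.d e * M.t e ν * u e * ψ ν) :=
    Finset.sum_comm' (by simp)
  rw [step1, step2]
  unfold StagMesh.innerV StagMesh.curl
  rw [Finset.mul_sum]
  refine Finset.sum_congr rfl fun ν _ => ?_
  have hA := (M.Av_pos ν).ne'
  calc (∑ e ∈ univ.filter (fun e => ν ∈ M.EV e),
          (1/2) * (M.d e * M.t e ν * u e * ψ ν))
      = ((1/2) * ψ ν) * ∑ e ∈ univ.filter (fun e => ν ∈ M.EV e),
          M.d e * M.t e ν * u e := by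
        rw [Finset.mul_sum]
        exact Finset.sum_congr rfl fun e _ => by ring
    _ = -(1/2) * (M.Av ν * (-(1 / M.Av ν) *
          ∑ e ∈ univ.filter (fun e => ν ∈ M.EV e), M.d e * M.t e ν * u e) * ψ ν) := by
        field_simp

end StagPoincareAux

namespace StagPoincareAux

open StagMesh Finset

variable {C V E : Type} [Fintype C] [Fintype V] [Fintype E]
  [DecidableEq C] [DecidableEq V] (M : StagMesh C V E)

/-- orthogonality of gradients and skew gradients -/
lemma ortho (hsc : M.SgnCancel) (φ : C → ℝ) (ψ : V → ℝ) :
    M.innerE (M.grad φ) (M.skewGrad ψ) = 0 := by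
  have step1 : M.innerE (M.grad φ) (M.skewGrad ψ)
      = ∑ e, ∑ i ∈ M.EC e, ∑ ν ∈ M.EV e,
          (-(1/2) * φ i * ψ ν) * (M.t e ν * M.n e i) := by
    refine Finset.sum_congr rfl fun e _ => ?_
    have hd := (M.d_pos e).ne'
    have hl := (M.l_pos e).ne'
    calc M.Ae e * M.grad φ e * M.skewGrad ψ e
        = (-(1/2)) * ((∑ i ∈ M.EC e, M.n e i * φ i) *
            (∑ ν ∈ M.EV e, M.t e ν * ψ ν)) := by
          unfold StagMesh.grad StagMesh.skewGrad StagMesh.Ae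
          field_simp
      _ = ∑ i ∈ M.EC e, ∑ ν ∈ M.EV e,
            (-(1/2) * φ i * ψ ν) * (M.t e ν * M.n e i) := by
          rw [Finset.sum_mul_sum, Finset.mul_sum]
          refine Finset.sum_congr rfl fun i _ => ?_
          rw [Finset.mul_sum]
          exact Finset.sum_congr rfl fun ν _ => by ring
  have step2 : (∑ e, ∑ i ∈ M.EC e, ∑ ν ∈ M.EV e,
          (-(1/2) * φ i * ψ ν) * (M.t e ν * M.n e i))
      = ∑ i, ∑ e ∈ univ.filter (fun e => i ∈ M.EC e), ∑ ν ∈ M.EV e,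
          (-(1/2) * φ i * ψ ν) * (M.t e ν * M.n e i) :=
    Finset.sum_comm' (by simp)
  have step3 : ∀ i : C, (∑ e ∈ univ.filter (fun e => i ∈ M.EC e), ∑ ν ∈ M.EV e,
          (-(1/2) * φ i * ψ ν) * (M.t e ν * M.n e i))
      = ∑ ν, ∑ e ∈ univ.filter (fun e => i ∈ M.EC e ∧ ν ∈ M.EV e),
          (-(1/2) * φ i * ψ ν) * (M.t e ν * M.n e i) := fun i =>
    Finset.sum_comm' (by intro e ν; simp)
  rw [step1, step2]
  refine Finset.sum_eq_zero fun i _ => ?_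
  rw [step3 i]
  refine Finset.sum_eq_zero fun ν _ => ?_
  rw [← Finset.mul_sum, hsc i ν, mul_zero]

/-- the mean functional as a linear map -/
def meanL : (C → ℝ) →ₗ[ℝ] ℝ where
  toFun φ := ∑ i, M.Ac i * φ i
  map_add' φ φ' := by
    simp only [Pi.add_apply, mul_add]
    rw [Finset.sum_add_distrib]
  map_smul' c φ := by
    simp only [Pi.smul_apply, smul_eq_mul, RingHom.id_apply]
    rw [Finset.mul_sum]
    exact Finset.sum_congr rfl fun i _ => by ring

/-- the combined (grad, skewGrad) linear map -/
def TL : ((C → ℝ) × (V → ℝ)) →ₗ[ℝ] (E → ℝ) where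
  toFun p := M.grad p.1 + M.skewGrad p.2
  map_add' p q := by
    funext e
    simp only [StagMesh.grad, StagMesh.skewGrad, Pi.add_apply, Prod.fst_add, Prod.snd_add,
      mul_add, Finset.sum_add_distrib]
    ring
  map_smul' c p := by
    funext e
    simp only [StagMesh.grad, StagMesh.skewGrad, Pi.add_apply, Pi.smul_apply,
      Prod.smul_fst, Prod.smul_snd, smul_eq_mul, RingHom.id_apply]
    rw [show (∑ i ∈ M.EC e, M.n e i * (c * p.1 i))
        = c * ∑ i ∈ M.EC e, M.n e i * p.1 i by
      rw [Finset.mul_sum]; exact Finset.sum_congr rfl fun i _ => by ring]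
    rw [show (∑ ν ∈ M.EV e, M.t e ν * (c * p.2 ν))
        = c * ∑ ν ∈ M.EV e, M.t e ν * p.2 ν by
      rw [Finset.mul_sum]; exact Finset.sum_congr rfl fun ν _ => by ring]
    ring

/-- discrete Hodge decomposition -/
lemma hodge (hsc : M.SgnCancel)
    (heuler : Fintype.card C + Fintype.card V = Fintype.card E + 1)
    (hks : ∀ ψ : V → ℝ, M.skewGrad ψ = 0 → ψ = 0)
    (hkg : ∀ φ : C → ℝ, M.grad φ = 0 → ∀ i j : C, φ i = φ j)
    (u : E → ℝ) :
    ∃ (φ : C → ℝ) (ψ : V → ℝ),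
      (∑ i, M.Ac i * φ i) = 0 ∧ M.grad φ + M.skewGrad ψ = u := by
  classical
  set K := LinearMap.ker (meanL M) with hK
  set T : (↥K × (V → ℝ)) →ₗ[ℝ] (E → ℝ) :=
    (TL M).comp (LinearMap.prodMap K.subtype LinearMap.id) with hT
  have hTapp : ∀ (x : ↥K × (V → ℝ)), T x = M.grad (x.1 : C → ℝ) + M.skewGrad x.2 := by
    intro x; rfl
  -- injectivity
  have hker : ∀ x : ↥K × (V → ℝ), T x = 0 → x = 0 := by
    rintro ⟨⟨φ, hφ⟩, ψ⟩ hx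
    have h0 : M.grad φ + M.skewGrad ψ = 0 := hx
    have hg0 : M.innerE (M.grad φ) (M.grad φ) = 0 := by
      have h1 : M.innerE (M.grad φ + M.skewGrad ψ) (M.grad φ) = 0 := by
        rw [h0]; unfold StagMesh.innerE; simp
      rw [innerE_add_left] at h1
      have h2 : M.innerE (M.skewGrad ψ) (M.grad φ) = 0 := by
        rw [innerE_symm]; exact ortho M hsc φ ψ
      linarith
    have hgrad : M.grad φ = 0 := innerE_self_eq_zero M hg0
    have hφc := hkg φ hgrad
    have hφ0 : φ = 0 := by
      funext j
      have hsum : (∑ i, M.Ac i * φ i) = (∑ i, M.Ac i) * φ j := by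
        rw [Finset.sum_mul]
        exact Finset.sum_congr rfl fun i _ => by rw [hφc i j]
      have hmean : (∑ i, M.Ac i * φ i) = 0 := hφ
      have hpos : 0 < ∑ i, M.Ac i :=
        Finset.sum_pos (fun i _ => M.Ac_pos i) ⟨j, mem_univ j⟩
      have : (∑ i, M.Ac i) * φ j = 0 := by rw [← hsum]; exact hmean
      have := mul_eq_zero.mp this
      rcases this with h | h
      · exact absurd h hpos.ne'
      · exact h
    have hskew : M.skewGrad ψ = 0 := by
      rw [hφ0] at h0
      have : M.grad 0 = 0 := by
        funext e; unfold StagMesh.grad; simp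
      rw [this, zero_add] at h0
      exact h0
    have hψ0 : ψ = 0 := hks ψ hskew
    have h1 : (⟨φ, hφ⟩ : ↥K) = 0 := Subtype.ext hφ0
    rw [Prod.ext_iff]
    exact ⟨h1, hψ0⟩
  have hinj : Function.Injective T := by
    rw [← LinearMap.ker_eq_bot]
    exact LinearMap.ker_eq_bot'.mpr hker
  -- dimensions
  have hDdim : Module.finrank ℝ (↥K × (V → ℝ))
      = Module.finrank ℝ ↥K + Fintype.card V := by
    rw [Module.finrank_prod, Module.finrank_pi]
  have hEdim : Module.finrank ℝ (E → ℝ) = Fintype.card E := Module.finrank_pi ℝ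
  rcases isEmpty_or_nonempty C with hC | hC
  · exfalso
    have hle := LinearMap.finrank_le_finrank_of_injective hinj
    rw [hDdim, hEdim] at hle
    have hc0 : Fintype.card C = 0 := Fintype.card_eq_zero
    omega
  -- C nonempty: meanL is surjective
  · obtain ⟨i₀⟩ := hC
    have hLsurj : Function.Surjective (meanL M) := by
      intro r
      refine ⟨fun j => if j = i₀ then r / M.Ac i₀ else 0, ?_⟩
      have : (meanL M) (fun j => if j = i₀ then r / M.Ac i₀ else 0)
          = ∑ i, (if i = i₀ then M.Ac i * (r / M.Ac i₀) else 0) := by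
        refine Finset.sum_congr rfl fun i _ => ?_
        by_cases h : i = i₀ <;> simp [h]
      rw [this, Finset.sum_ite_eq' univ i₀ (fun i => M.Ac i * (r / M.Ac i₀))]
      simp only [mem_univ, if_true]
      field_simp [(M.Ac_pos i₀).ne']
    have hrange : LinearMap.range (meanL M) = ⊤ := LinearMap.range_eq_top.mpr hLsurj
    have hrk := LinearMap.finrank_range_add_finrank_ker (meanL M)
    rw [hrange, finrank_top, Module.finrank_self, Module.finrank_pi] at hrk
    have hcpos : 0 < Fintype.card C := Fintype.card_pos_iff.mpr ⟨i₀⟩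
    have hDval : Module.finrank ℝ (↥K × (V → ℝ)) = Fintype.card E := by
      rw [hDdim, hK]; omega
    have hrange2 : LinearMap.range T = ⊤ := by
      apply Submodule.eq_top_of_finrank_eq
      rw [LinearMap.finrank_range_of_inj hinj, hDval, hEdim]
    obtain ⟨⟨⟨φ, hφ⟩, ψ⟩, hx⟩ := LinearMap.range_eq_top.mp hrange2 u
    exact ⟨φ, ψ, hφ, hx⟩

end StagPoincareAux

namespace StagPoincareAux

open StagMesh Finset

variable {C V E : Type} [Fintype C] [Fintype V] [Fintype E]
  [DecidableEq C] [DecidableEq V] (M : StagMesh C V E)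

lemma abs_innerC_le (χ φ : C → ℝ) : |M.innerC χ φ| ≤ M.normC χ * M.normC φ := by
  have h := Finset.sum_mul_sq_le_sq_mul_sq univ
    (fun i => Real.sqrt (M.Ac i) * χ i) (fun i => Real.sqrt (M.Ac i) * φ i)
  have e0 : ∀ (f g : C → ℝ), (∑ i, (Real.sqrt (M.Ac i) * f i) * (Real.sqrt (M.Ac i) * g i))
      = M.innerC f g := by
    intro f g
    refine Finset.sum_congr rfl fun i _ => ?_
    have : Real.sqrt (M.Ac i) * Real.sqrt (M.Ac i) = M.Ac i :=
      Real.mul_self_sqrt (M.Ac_pos i).le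
    calc (Real.sqrt (M.Ac i) * f i) * (Real.sqrt (M.Ac i) * g i)
        = (Real.sqrt (M.Ac i) * Real.sqrt (M.Ac i)) * f i * g i := by ring
      _ = M.Ac i * f i * g i := by rw [this]
  have e1 : ∀ (f : C → ℝ), (∑ i, (Real.sqrt (M.Ac i) * f i) ^ 2) = M.innerC f f := by
    intro f
    rw [← e0 f f]
    exact Finset.sum_congr rfl fun i _ => by ring
  rw [e0 χ φ, e1, e1] at h
  have hsq : M.innerC χ φ ^ 2 ≤ (M.normC χ * M.normC φ) ^ 2 := by
    rw [mul_pow, sq_normC, sq_normC]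
    exact h
  calc |M.innerC χ φ| = Real.sqrt (M.innerC χ φ ^ 2) := (Real.sqrt_sq_eq_abs _).symm
    _ ≤ Real.sqrt ((M.normC χ * M.normC φ) ^ 2) := Real.sqrt_le_sqrt hsq
    _ = M.normC χ * M.normC φ := Real.sqrt_sq
        (mul_nonneg (Real.sqrt_nonneg _) (Real.sqrt_nonneg _))

lemma abs_innerV_le (χ φ : V → ℝ) : |M.innerV χ φ| ≤ M.normV χ * M.normV φ := by
  have h := Finset.sum_mul_sq_le_sq_mul_sq univ
    (fun i => Real.sqrt (M.Av i) * χ i) (fun i => Real.sqrt (M.Av i) * φ i)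
  have e0 : ∀ (f g : V → ℝ), (∑ i, (Real.sqrt (M.Av i) * f i) * (Real.sqrt (M.Av i) * g i))
      = M.innerV f g := by
    intro f g
    refine Finset.sum_congr rfl fun i _ => ?_
    have : Real.sqrt (M.Av i) * Real.sqrt (M.Av i) = M.Av i :=
      Real.mul_self_sqrt (M.Av_pos i).le
    calc (Real.sqrt (M.Av i) * f i) * (Real.sqrt (M.Av i) * g i)
        = (Real.sqrt (M.Av i) * Real.sqrt (M.Av i)) * f i * g i := by ring
      _ = M.Av i * f i * g i := by rw [this]
  have e1 : ∀ (f : V → ℝ), (∑ i, (Real.sqrt (M.Av i) * f i) ^ 2) = M.innerV f f := by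
    intro f
    rw [← e0 f f]
    exact Finset.sum_congr rfl fun i _ => by ring
  rw [e0 χ φ, e1, e1] at h
  have hsq : M.innerV χ φ ^ 2 ≤ (M.normV χ * M.normV φ) ^ 2 := by
    rw [mul_pow, sq_normV, sq_normV]
    exact h
  calc |M.innerV χ φ| = Real.sqrt (M.innerV χ φ ^ 2) := (Real.sqrt_sq_eq_abs _).symm
    _ ≤ Real.sqrt ((M.normV χ * M.normV φ) ^ 2) := Real.sqrt_le_sqrt hsq
    _ = M.normV χ * M.normV φ := Real.sqrt_sq
        (mul_nonneg (Real.sqrt_nonneg _) (Real.sqrt_nonneg _))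

end StagPoincareAux
set_option maxHeartbeats 1000000 in
/-- discrete Poincaré inequality for vector fields: under the
standing mesh hypotheses and the scalar discrete Poincaré inequalities, every
discrete vector field `u` satisfies
`|u|_0 ≤ (max(C₁,C₂)/2) (|∇_h·u|_0² + |∇̃_h×u|_0²)^{1/2}`. -/
theorem discrete_poincare_vector
    {C V E : Type} [Fintype C] [Fintype V] [Fintype E]
    [DecidableEq C] [DecidableEq V]
    (M : StagMesh C V E)
    (hsc : M.SgnCancel)
    (heuler : Fintype.card C + Fintype.card V = Fintype.card E + 1)
    (hks : ∀ ψ : V → ℝ, M.skewGrad ψ = 0 → ψ = 0)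
    (hkg : ∀ φ : C → ℝ, M.grad φ = 0 → ∀ i j : C, φ i = φ j)
    (C₁ C₂ : ℝ) (hC₁ : 0 < C₁) (hC₂ : 0 < C₂)
    (hP1 : ∀ φ : C → ℝ, (∑ i, M.Ac i * φ i) = 0 → M.normC φ ≤ C₁ * M.normE (M.grad φ))
    (hP2 : ∀ ψ : V → ℝ, M.normV ψ ≤ C₂ * M.normE (M.skewGrad ψ))
    (u : E → ℝ) :
    M.normE u ≤ (max C₁ C₂ / 2) *
      Real.sqrt (M.normC (M.dvg u) ^ 2 + M.normV (M.curl u) ^ 2) := by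

  classical
  open StagPoincareAux in
  obtain ⟨φ, ψ, hmean, hdec⟩ := StagPoincareAux.hodge M hsc heuler hks hkg u
  set a := M.normE (M.grad φ) with ha_def
  set b := M.normE (M.skewGrad ψ) with hb_def
  set p := M.normC (M.dvg u) with hp_def
  set q := M.normV (M.curl u) with hq_def
  have ha : 0 ≤ a := Real.sqrt_nonneg _
  have hb : 0 ≤ b := Real.sqrt_nonneg _
  have hp : 0 ≤ p := Real.sqrt_nonneg _
  have hq : 0 ≤ q := Real.sqrt_nonneg _
  have hN : 0 ≤ M.normE u := Real.sqrt_nonneg _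
  have hor := StagPoincareAux.ortho M hsc φ ψ
  -- Pythagoras
  have h1 : M.innerE u u = a ^ 2 + b ^ 2 := by
    rw [← hdec, StagPoincareAux.innerE_expand, hor,
      ← StagPoincareAux.sq_normE, ← StagPoincareAux.sq_normE]
    ring
  -- integration by parts
  have h2 : M.innerE u u
      = -(1/2) * (M.innerC (M.dvg u) φ + M.innerV (M.curl u) ψ) := by
    conv_lhs => rw [show M.innerE u u = M.innerE u (M.grad φ + M.skewGrad ψ) by rw [hdec]]
    rw [StagPoincareAux.innerE_add_right, StagPoincareAux.ibp_grad,
      StagPoincareAux.ibp_skew]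
    ring
  -- scalar Poincaré bounds
  have hPφ : M.normC φ ≤ C₁ * a := hP1 φ hmean
  have hPψ : M.normV ψ ≤ C₂ * b := hP2 ψ
  have hX := StagPoincareAux.abs_innerC_le M (M.dvg u) φ
  have hY := StagPoincareAux.abs_innerV_le M (M.curl u) ψ
  -- bound the energy
  have hmaxpos : 0 < max C₁ C₂ := lt_of_lt_of_le hC₁ (le_max_left _ _)
  have hC1le : C₁ ≤ max C₁ C₂ := le_max_left _ _
  have hC2le : C₂ ≤ max C₁ C₂ := le_max_right _ _
  have hNφ : 0 ≤ M.normC φ := Real.sqrt_nonneg _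
  have hNψ : 0 ≤ M.normV ψ := Real.sqrt_nonneg _
  have h3 : M.innerE u u ≤ (max C₁ C₂ / 2) * (p * a + q * b) := by
    have e1 : -(M.innerC (M.dvg u) φ) ≤ p * M.normC φ := by
      have := neg_abs_le (M.innerC (M.dvg u) φ)
      linarith [hX]
    have e2 : -(M.innerV (M.curl u) ψ) ≤ q * M.normV ψ := by
      have := neg_abs_le (M.innerV (M.curl u) ψ)
      linarith [hY]
    have e3 : p * M.normC φ ≤ p * (C₁ * a) := mul_le_mul_of_nonneg_left hPφ hp
    have e4 : q * M.normV ψ ≤ q * (C₂ * b) := mul_le_mul_of_nonneg_left hPψ hq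
    have e5 : p * (C₁ * a) ≤ max C₁ C₂ * (p * a) := by
      have : C₁ * (p * a) ≤ max C₁ C₂ * (p * a) :=
        mul_le_mul_of_nonneg_right hC1le (mul_nonneg hp ha)
      linarith [this]
    have e6 : q * (C₂ * b) ≤ max C₁ C₂ * (q * b) := by
      have : C₂ * (q * b) ≤ max C₁ C₂ * (q * b) :=
        mul_le_mul_of_nonneg_right hC2le (mul_nonneg hq hb)
      linarith [this]
    rw [h2]
    nlinarith [e1, e2, e3, e4, e5, e6]
  -- Cauchy–Schwarz in ℝ²
  set s := Real.sqrt (p ^ 2 + q ^ 2) with hs_def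
  have hs : 0 ≤ s := Real.sqrt_nonneg _
  have hs2 : s ^ 2 = p ^ 2 + q ^ 2 := Real.sq_sqrt (by positivity)
  have htN : Real.sqrt (a ^ 2 + b ^ 2) = M.normE u := by
    rw [← h1]; rfl
  have ht2 : M.normE u ^ 2 = a ^ 2 + b ^ 2 := by
    rw [StagPoincareAux.sq_normE, h1]
  have hcs : p * a + q * b ≤ s * M.normE u := by
    have hsq : (p * a + q * b) ^ 2 ≤ (s * M.normE u) ^ 2 := by
      rw [mul_pow, hs2, ht2]
      nlinarith [sq_nonneg (p * b - q * a)]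
    exact le_of_pow_le_pow_left₀ two_ne_zero (mul_nonneg hs hN) hsq
  have hfinal : M.normE u ^ 2 ≤ ((max C₁ C₂ / 2) * s) * M.normE u := by
    rw [StagPoincareAux.sq_normE]
    calc M.innerE u u ≤ (max C₁ C₂ / 2) * (p * a + q * b) := h3
      _ ≤ (max C₁ C₂ / 2) * (s * M.normE u) := by
        apply mul_le_mul_of_nonneg_left hcs
        positivity
      _ = ((max C₁ C₂ / 2) * s) * M.normE u := by ring
  have hgoal : M.normE u ≤ (max C₁ C₂ / 2) * s := by
    rcases eq_or_lt_of_le hN with h0 | h0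
    · rw [← h0]; positivity
    · have := hfinal
      rw [pow_two] at this
      exact le_of_mul_le_mul_right this h0
  exact hgoal
end
end
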